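/- Let $1 \le p < \infty$, let $C_p := 2^p \Gamma(1 + 1/p)^p$ be the normalizing constant so that $\int_{\mathbb{R}^m} e^{-C_p\|\vec{x}\|_p^p}\,d\vec{x} = 1$, and let $D^{(p)}$ be the continuous distribution on $\mathbb{R}^m$ with density $e^{-C_p \|\vec{x}\|_p^p}$. Then for any $\vec{y} \in \mathbb{R}^m$, any $1 \le q \le \infty$, and any $\varepsilon \in (0, 1/100)$, with $r := 10\log^{1/p}(1/\varepsilon)/C_p^{1/p}$, we have $\Pr_{\vec{X} \sim D^{(p)}}[\|\vec{X} - \vec{y}\|_q \le m^{1/q} r] \ge e^{-\varepsilon m - C_p \|\vec{y}\|_p^p}$. -/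

import Mathlib

open scoped ENNReal
open MeasureTheory

noncomputable def lpnorm (q : ℝ≥0∞) {m : ℕ} (x : Fin m → ℝ) : ℝ :=
  if q = ⊤ then ⨆ i, |x i| else (∑ i, |x i| ^ q.toReal) ^ (1 / q.toReal)

open Real Set

/-!
The density and the box `∏ i, [y i - r, y i + r]` both factor over the coordinates, and the box
lies in the `ℓ_q`-ball of radius `m ^ (1/q) * r` around `y`, so it suffices to show
`∫_{|t - y_i| ≤ r} exp (-C_p |t|^p) dt ≥ exp (-ε - C_p |y_i|^p)` for each coordinate.
If `|y_i| ≤ r / 2`, the interval contains `[-r/2, r/2]`, whose complement has mass at most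
`2 exp (-C_p (r/2)^p / 2) ≤ 2 ε²`, and `1 - 2 ε² ≥ exp (-ε)`. Otherwise the interval contains
a unit interval on which `|t| ≤ |y_i|`, so the integral is at least `exp (-C_p |y_i|^p)`.
-/

section ExpNegMulRpow

variable {p b : ℝ}

lemma integrableOn_Ioi_exp_neg_mul_rpow (hp : 0 < p) (hb : 0 < b) :
    IntegrableOn (fun t : ℝ => exp (-b * t ^ p)) (Ioi 0) := by
  simpa using integrableOn_rpow_mul_exp_neg_mul_rpow (s := 0) (by norm_num) hp hb

lemma integral_exp_neg_mul_abs_rpow (hp : 0 < p) (hb : 0 < b) :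
    ∫ t, exp (-b * |t| ^ p) = 2 * (b ^ (-1 / p) * Gamma (1 / p + 1)) := by
  rw [integral_comp_abs (f := fun t => exp (-b * t ^ p)), integral_exp_neg_mul_rpow hp hb]

lemma setIntegral_Ioi_exp_neg_mul_rpow_le (hp : 0 < p) (hb : 0 < b) {s : ℝ} (hs : 0 ≤ s) :
    ∫ t in Ioi s, exp (-b * t ^ p) ≤
      exp (-(b * s ^ p) / 2) * ((b / 2) ^ (-1 / p) * Gamma (1 / p + 1)) := by
  have hb2 : 0 < b / 2 := half_pos hb
  have hsub : Ioi s ⊆ Ioi 0 := Ioi_subset_Ioi hs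
  -- for `t ≥ s`, half of the exponent `b t ^ p` already pays for the factor `exp (-b s ^ p / 2)`
  have hsplit : ∀ t ∈ Ioi s,
      exp (-b * t ^ p) ≤ exp (-(b * s ^ p) / 2) * exp (-(b / 2) * t ^ p) := by
    intro t ht
    have : s ^ p ≤ t ^ p := rpow_le_rpow hs (le_of_lt ht) hp.le
    rw [← exp_add, exp_le_exp]
    nlinarith
  calc ∫ t in Ioi s, exp (-b * t ^ p)
      ≤ ∫ t in Ioi s, exp (-(b * s ^ p) / 2) * exp (-(b / 2) * t ^ p) :=
        setIntegral_mono_on ((integrableOn_Ioi_exp_neg_mul_rpow hp hb).mono_set hsub)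
          (((integrableOn_Ioi_exp_neg_mul_rpow hp hb2).mono_set hsub).const_mul _)
          measurableSet_Ioi hsplit
    _ = exp (-(b * s ^ p) / 2) * ∫ t in Ioi s, exp (-(b / 2) * t ^ p) := integral_const_mul _ _
    _ ≤ exp (-(b * s ^ p) / 2) * ∫ t in Ioi 0, exp (-(b / 2) * t ^ p) := by
        refine mul_le_mul_of_nonneg_left ?_ (exp_pos _).le
        exact setIntegral_mono_set (integrableOn_Ioi_exp_neg_mul_rpow hp hb2)
          (ae_of_all _ fun t => (exp_pos _).le) hsub.eventuallyLE
    _ = exp (-(b * s ^ p) / 2) * ((b / 2) ^ (-1 / p) * Gamma (1 / p + 1)) := by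
        rw [integral_exp_neg_mul_rpow hp hb2]

lemma setIntegral_Icc_exp_neg_mul_abs_rpow (hp : 0 < p) (hb : 0 < b) {a : ℝ} (ha : 0 ≤ a) :
    ∫ t in Icc (-a) a, exp (-b * |t| ^ p) =
      (∫ t, exp (-b * |t| ^ p)) - 2 * ∫ t in Ioi a, exp (-b * t ^ p) := by
  have hint : Integrable (fun t : ℝ => exp (-b * |t| ^ p)) := by
    refine .of_integral_ne_zero ?_
    rw [integral_exp_neg_mul_abs_rpow hp hb]
    have := Gamma_pos_of_pos (by positivity : 0 < 1 / p + 1)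
    positivity
  have hcompl : (Icc (-a) a)ᶜ.indicator (fun t => exp (-b * |t| ^ p)) =
      fun t => (Ioi a).indicator (fun u => exp (-b * u ^ p)) |t| := by
    ext t
    by_cases ht : a < |t| <;> simp [indicator, ← abs_le, ht]
  have hout :
      ∫ t in (Icc (-a) a)ᶜ, exp (-b * |t| ^ p) = 2 * ∫ t in Ioi a, exp (-b * t ^ p) := by
    rw [← integral_indicator measurableSet_Icc.compl, hcompl, integral_comp_abs,
      setIntegral_indicator measurableSet_Ioi, Ioi_inter_Ioi, max_eq_right ha]
  rw [← hout]
  exact eq_sub_of_add_eq (integral_add_compl measurableSet_Icc hint)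

lemma continuous_exp_neg_mul_abs_rpow (hp : 0 ≤ p) :
    Continuous fun t : ℝ => exp (-b * |t| ^ p) := by
  have := continuous_rpow_const hp
  fun_prop

lemma exp_neg_mul_abs_rpow_le_setIntegral_Icc (hp : 0 ≤ p) (hb : 0 ≤ b) {y r : ℝ}
    (hr : 1 ≤ r) (hy : 1 / 2 ≤ |y|) :
    exp (-b * |y| ^ p) ≤ ∫ t in Icc (y - r) (y + r), exp (-b * |t| ^ p) := by
  obtain ⟨c, hsub, hle⟩ : ∃ c, Icc c (c + 1) ⊆ Icc (y - r) (y + r) ∧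
      ∀ t ∈ Icc c (c + 1), |t| ≤ |y| := by
    rcases le_total 0 y with hy0 | hy0
    · rw [abs_of_nonneg hy0] at hy ⊢
      exact ⟨y - 1, Icc_subset_Icc (by linarith) (by linarith),
        fun t ht => abs_le.2 ⟨by linarith [ht.1], by linarith [ht.2]⟩⟩
    · rw [abs_of_nonpos hy0] at hy ⊢
      exact ⟨y, Icc_subset_Icc (by linarith) (by linarith),
        fun t ht => abs_le.2 ⟨by linarith [ht.1], by linarith [ht.2]⟩⟩
  have hcont := continuous_exp_neg_mul_abs_rpow (b := b) hp
  calc exp (-b * |y| ^ p) = exp (-b * |y| ^ p) * volume.real (Icc c (c + 1)) := by simp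
    _ ≤ ∫ t in Icc c (c + 1), exp (-b * |t| ^ p) := by
        refine setIntegral_ge_of_const_le_real measurableSet_Icc measure_Icc_lt_top.ne
          (fun t ht => ?_) hcont.integrableOn_Icc
        have := rpow_le_rpow (abs_nonneg t) (hle t ht) hp
        rw [exp_le_exp]
        nlinarith
    _ ≤ ∫ t in Icc (y - r) (y + r), exp (-b * |t| ^ p) :=
        setIntegral_mono_set hcont.integrableOn_Icc
          (ae_of_all _ fun t => (exp_pos _).le) hsub.eventuallyLE

end ExpNegMulRpow

lemma Gamma_le_one_of_mem_Icc {x : ℝ} (hx : x ∈ Icc 1 2) : Gamma x ≤ 1 := by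
  have hconv := convexOn_Gamma.2 (mem_Ioi.mpr one_pos) (mem_Ioi.mpr two_pos)
    (by linarith [hx.2] : (0 : ℝ) ≤ 2 - x) (by linarith [hx.1] : (0 : ℝ) ≤ x - 1) (by ring)
  simp only [smul_eq_mul, Gamma_one, Gamma_two] at hconv
  calc Gamma x = Gamma ((2 - x) * 1 + (x - 1) * 2) := by ring_nf
    _ ≤ 1 := by linarith

noncomputable def normalizingConst (p : ℝ) : ℝ := 2 ^ p * Gamma (1 + 1 / p) ^ p

section NormalizingConst

variable {p : ℝ}

lemma Gamma_one_add_one_div_pos (hp : 0 < p) : 0 < Gamma (1 + 1 / p) :=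
  Gamma_pos_of_pos (by positivity)

lemma normalizingConst_pos (hp : 0 < p) : 0 < normalizingConst p := by
  have := Gamma_one_add_one_div_pos hp
  unfold normalizingConst
  positivity

lemma normalizingConst_rpow_one_div (hp : 0 < p) :
    normalizingConst p ^ (1 / p) = 2 * Gamma (1 + 1 / p) := by
  have hΓ := Gamma_one_add_one_div_pos hp
  rw [normalizingConst, mul_rpow (by positivity) (by positivity), ← rpow_mul zero_le_two,
    ← rpow_mul hΓ.le, mul_one_div_cancel hp.ne', rpow_one, rpow_one]

lemma normalizingConst_rpow_one_div_le_two (hp : 1 ≤ p) : normalizingConst p ^ (1 / p) ≤ 2 := by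
  have hΓ : Gamma (1 + 1 / p) ≤ 1 := Gamma_le_one_of_mem_Icc
    ⟨le_add_of_nonneg_right (by positivity), by linarith [(div_le_one (by linarith)).2 hp]⟩
  rw [normalizingConst_rpow_one_div (by linarith)]
  linarith

lemma integral_exp_neg_normalizingConst_mul_abs_rpow (hp : 0 < p) :
    ∫ t, exp (-normalizingConst p * |t| ^ p) = 1 := by
  have hC := normalizingConst_pos hp
  rw [integral_exp_neg_mul_abs_rpow hp hC, neg_div, rpow_neg hC.le,
    normalizingConst_rpow_one_div hp, add_comm]
  have := Gamma_one_add_one_div_pos hp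
  field_simp

lemma setIntegral_Ioi_exp_neg_normalizingConst_mul_rpow_le (hp : 1 ≤ p) {s : ℝ} (hs : 0 ≤ s) :
    ∫ t in Ioi s, exp (-normalizingConst p * t ^ p) ≤ exp (-(normalizingConst p * s ^ p) / 2) := by
  have hp0 : 0 < p := by linarith
  have hC := normalizingConst_pos hp0
  have hΓ := Gamma_one_add_one_div_pos hp0
  have h2 : (2 : ℝ) ^ (1 / p) ≤ 2 := by
    simpa using rpow_le_rpow_of_exponent_le one_le_two ((div_le_one hp0).2 hp)
  have hfactor :
      (normalizingConst p / 2) ^ (-1 / p) * Gamma (1 / p + 1) = 2 ^ (1 / p) / 2 := by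
    rw [neg_div, rpow_neg (by positivity), div_rpow hC.le zero_le_two,
      normalizingConst_rpow_one_div hp0, add_comm]
    field_simp
  refine (setIntegral_Ioi_exp_neg_mul_rpow_le hp0 hC hs).trans ?_
  rw [hfactor]
  exact mul_le_of_le_one_right (exp_pos _).le (by linarith)

lemma one_sub_two_mul_exp_le_setIntegral_Icc (hp : 1 ≤ p) {a : ℝ} (ha : 0 ≤ a) :
    1 - 2 * exp (-(normalizingConst p * a ^ p) / 2) ≤
      ∫ t in Icc (-a) a, exp (-normalizingConst p * |t| ^ p) := by
  have hp0 : 0 < p := by linarith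
  rw [setIntegral_Icc_exp_neg_mul_abs_rpow hp0 (normalizingConst_pos hp0) ha,
    integral_exp_neg_normalizingConst_mul_abs_rpow hp0]
  linarith [setIntegral_Ioi_exp_neg_normalizingConst_mul_rpow_le hp ha]

lemma exp_neg_le_one_sub_two_mul_sq {ε : ℝ} (hε : 0 ≤ ε) (hε' : ε ≤ 1 / 4) :
    exp (-ε) ≤ 1 - 2 * ε ^ 2 := by
  rw [exp_neg, inv_le_iff_one_le_mul₀ (exp_pos ε)]
  have hpos : 0 ≤ 1 - 2 * ε ^ 2 := by nlinarith
  nlinarith [mul_le_mul_of_nonneg_left (add_one_le_exp ε) hpos,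
    mul_nonneg hε (by nlinarith : 0 ≤ 1 - 2 * ε - 2 * ε ^ 2)]

lemma exp_neg_sub_le_setIntegral_Icc (hp : 1 ≤ p) {ε r : ℝ} (hε : 0 < ε) (hε' : ε ≤ 1 / 4)
    (hr : 1 ≤ r) (hCr : 4 * log (1 / ε) ≤ normalizingConst p * (r / 2) ^ p) (y : ℝ) :
    exp (-ε - normalizingConst p * |y| ^ p) ≤
      ∫ t in Icc (y - r) (y + r), exp (-normalizingConst p * |t| ^ p) := by
  have hp0 : 0 < p := by linarith
  have hC := normalizingConst_pos hp0
  rcases le_or_gt |y| (r / 2) with hy | hy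
  · have htail : exp (-(normalizingConst p * (r / 2) ^ p) / 2) ≤ ε ^ 2 := by
      calc exp (-(normalizingConst p * (r / 2) ^ p) / 2) ≤ exp (2 * log ε) := by
            rw [exp_le_exp]
            rw [one_div, log_inv] at hCr
            linarith
        _ = ε ^ 2 := by rw [mul_comm, exp_mul, exp_log hε]; norm_cast
    calc exp (-ε - normalizingConst p * |y| ^ p) ≤ exp (-ε) := by
          rw [exp_le_exp]
          linarith [mul_nonneg hC.le (rpow_nonneg (abs_nonneg y) p)]
      _ ≤ 1 - 2 * ε ^ 2 := exp_neg_le_one_sub_two_mul_sq hε.le hε'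
      _ ≤ 1 - 2 * exp (-(normalizingConst p * (r / 2) ^ p) / 2) := by linarith
      _ ≤ ∫ t in Icc (-(r / 2)) (r / 2), exp (-normalizingConst p * |t| ^ p) :=
          one_sub_two_mul_exp_le_setIntegral_Icc hp (by linarith)
      _ ≤ ∫ t in Icc (y - r) (y + r), exp (-normalizingConst p * |t| ^ p) := by
          obtain ⟨hy₁, hy₂⟩ := abs_le.1 hy
          exact setIntegral_mono_set
            (continuous_exp_neg_mul_abs_rpow hp0.le).integrableOn_Icc
            (ae_of_all _ fun t => (exp_pos _).le)
            (Icc_subset_Icc (by linarith) (by linarith)).eventuallyLE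
  · calc exp (-ε - normalizingConst p * |y| ^ p) ≤ exp (-normalizingConst p * |y| ^ p) := by
          rw [exp_le_exp]
          linarith
      _ ≤ ∫ t in Icc (y - r) (y + r), exp (-normalizingConst p * |t| ^ p) :=
          exp_neg_mul_abs_rpow_le_setIntegral_Icc hp0.le hC.le hr (by linarith)

lemma one_le_radius (hp : 1 ≤ p) {L : ℝ} (hL : 1 ≤ L) :
    1 ≤ 10 * L ^ (1 / p) / normalizingConst p ^ (1 / p) := by
  have hp0 : 0 < p := by linarith
  have hC : 0 < normalizingConst p ^ (1 / p) := rpow_pos_of_pos (normalizingConst_pos hp0) _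
  have hL' : 1 ≤ L ^ (1 / p) := one_le_rpow hL (by positivity)
  rw [le_div_iff₀ hC]
  linarith [normalizingConst_rpow_one_div_le_two hp]

lemma four_mul_le_normalizingConst_mul_half_radius_rpow (hp : 1 ≤ p) {L : ℝ} (hL : 0 ≤ L) :
    4 * L ≤ normalizingConst p * (10 * L ^ (1 / p) / normalizingConst p ^ (1 / p) / 2) ^ p := by
  have hp0 : 0 < p := by linarith
  have hC := normalizingConst_pos hp0
  have h5 : (5 : ℝ) ≤ 5 ^ p := by
    simpa using rpow_le_rpow_of_exponent_le (by norm_num : (1 : ℝ) ≤ 5) hp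
  have hpow : ∀ {x : ℝ}, 0 ≤ x → (x ^ (1 / p)) ^ p = x := fun hx => by
    rw [← rpow_mul hx, one_div_mul_cancel hp0.ne', rpow_one]
  have hhalf : 10 * L ^ (1 / p) / normalizingConst p ^ (1 / p) / 2 =
      5 * L ^ (1 / p) / normalizingConst p ^ (1 / p) := by ring
  rw [hhalf, div_rpow (by positivity) (by positivity), mul_rpow (by norm_num) (by positivity),
    hpow hL, hpow hC.le]
  field_simp
  nlinarith

end NormalizingConst

lemma setIntegral_univ_pi_prod {ι 𝕜 : Type*} [Fintype ι] [RCLike 𝕜] {E : ι → Type*}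
    [∀ i, MeasurableSpace (E i)] (μ : ∀ i, Measure (E i)) [∀ i, SigmaFinite (μ i)]
    (f : ∀ i, E i → 𝕜) (s : ∀ i, Set (E i)) :
    ∫ x in univ.pi s, ∏ i, f i (x i) ∂Measure.pi μ = ∏ i, ∫ t in s i, f i t ∂μ i := by
  rw [Measure.restrict_pi_pi, integral_fintype_prod_eq_prod]

section Lpnorm

variable {m : ℕ}

lemma lpnorm_ofReal_rpow {p : ℝ} (hp : 0 < p) (x : Fin m → ℝ) :
    lpnorm (ENNReal.ofReal p) x ^ p = ∑ i, |x i| ^ p := by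
  rw [lpnorm, if_neg ENNReal.ofReal_ne_top, ENNReal.toReal_ofReal hp.le,
    ← rpow_mul (by positivity), one_div_mul_cancel hp.ne', rpow_one]

lemma lpnorm_le_of_forall_abs_le {q : ℝ≥0∞} (hq : q ≠ 0) {x : Fin m → ℝ} {r : ℝ} (hr : 0 ≤ r)
    (hx : ∀ i, |x i| ≤ r) : lpnorm q x ≤ (m : ℝ) ^ (1 / q).toReal * r := by
  by_cases hqt : q = ⊤
  · subst hqt
    simpa [lpnorm] using Real.iSup_le hx hr
  have hq0 : 0 < q.toReal := ENNReal.toReal_pos hq hqt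
  have hq_inv : (1 / q).toReal = 1 / q.toReal := by rw [one_div, ENNReal.toReal_inv, one_div]
  rw [lpnorm, if_neg hqt, hq_inv]
  calc (∑ i, |x i| ^ q.toReal) ^ (1 / q.toReal)
      ≤ (∑ _i : Fin m, r ^ q.toReal) ^ (1 / q.toReal) := by
        gcongr with i
        exact hx i
    _ = (m : ℝ) ^ (1 / q.toReal) * r := by
        rw [Finset.sum_const, Finset.card_univ, Fintype.card_fin, nsmul_eq_mul,
          mul_rpow (Nat.cast_nonneg m) (by positivity), ← rpow_mul hr,
          mul_one_div_cancel hq0.ne', rpow_one]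

end Lpnorm

theorem stmt_15 (m : ℕ) (p : ℝ) (hp : 1 ≤ p) (q : ℝ≥0∞) (hq : 1 ≤ q)
    (y : Fin m → ℝ) (ε : ℝ) (hε : 0 < ε) (hε' : ε < 1 / 100)
    (Cp r : ℝ) (hCp : Cp = 2 ^ p * Real.Gamma (1 + 1 / p) ^ p)
    (hr : r = 10 * Real.log (1 / ε) ^ (1 / p) / Cp ^ (1 / p)) :
    Real.exp (-ε * m - Cp * lpnorm (ENNReal.ofReal p) y ^ p) ≤
      ∫ x in {x : Fin m → ℝ | lpnorm q (x - y) ≤ (m : ℝ) ^ (1 / q).toReal * r},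
        Real.exp (-Cp * lpnorm (ENNReal.ofReal p) x ^ p) := by
  obtain rfl : Cp = normalizingConst p := hCp
  have hp0 : 0 < p := by linarith
  have hL : 1 ≤ log (1 / ε) := by
    rw [le_log_iff_exp_le (by positivity), le_div_iff₀ hε]
    nlinarith [exp_one_lt_d9]
  have hr1 : 1 ≤ r := hr ▸ one_le_radius hp hL
  have hCr : 4 * log (1 / ε) ≤ normalizingConst p * (r / 2) ^ p :=
    hr ▸ four_mul_le_normalizingConst_mul_half_radius_rpow hp (by linarith)
  have hbox : univ.pi (fun i => Icc (y i - r) (y i + r)) ⊆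
      {x | lpnorm q (x - y) ≤ (m : ℝ) ^ (1 / q).toReal * r} := fun x hx =>
    lpnorm_le_of_forall_abs_le (zero_lt_one.trans_le hq).ne' (by linarith) fun i =>
      abs_sub_le_iff.2 ⟨by linarith [(hx i (mem_univ i)).2], by linarith [(hx i (mem_univ i)).1]⟩
  have hint : Integrable fun x : Fin m → ℝ => ∏ i, exp (-normalizingConst p * |x i| ^ p) :=
    .fintype_prod fun _ => integrable_of_integral_eq_one
      (integral_exp_neg_normalizingConst_mul_abs_rpow hp0)
  calc exp (-ε * m - normalizingConst p * lpnorm (ENNReal.ofReal p) y ^ p)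
      = ∏ i, exp (-ε - normalizingConst p * |y i| ^ p) := by
        rw [lpnorm_ofReal_rpow hp0, ← exp_sum, Finset.sum_sub_distrib, Finset.mul_sum,
          Finset.sum_const, Finset.card_univ, Fintype.card_fin, nsmul_eq_mul]
        ring_nf
    _ ≤ ∏ i, ∫ t in Icc (y i - r) (y i + r), exp (-normalizingConst p * |t| ^ p) :=
        Finset.prod_le_prod (fun i _ => (exp_pos _).le) fun i _ =>
          exp_neg_sub_le_setIntegral_Icc hp hε (by linarith) hr1 hCr (y i)
    _ = ∫ x in univ.pi fun i => Icc (y i - r) (y i + r),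
          ∏ i, exp (-normalizingConst p * |x i| ^ p) :=
        (setIntegral_univ_pi_prod _ _ _).symm
    _ ≤ ∫ x in {x | lpnorm q (x - y) ≤ (m : ℝ) ^ (1 / q).toReal * r},
          ∏ i, exp (-normalizingConst p * |x i| ^ p) :=
        setIntegral_mono_set hint.integrableOn
          (ae_of_all _ fun x => Finset.prod_nonneg fun i _ => (exp_pos _).le) hbox.eventuallyLE
    _ = _ := by simp_rw [lpnorm_ofReal_rpow hp0, Finset.mul_sum, exp_sum]
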